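/- arXiv:2512.06315 — 4 statements merged into one kernel-verified Lean document; each statement's English description precedes it below -/
import Mathlib

section
/- (LaSalle's invariance principle.) Let Ω ⊂ D be a compact set that is positively invariant with respect to the autonomous system ẋ = F(x), where F is locally Lipschitz on an open set D ⊆ ℝⁿ. Let V : D → ℝ be continuously differentiable with ∇V(x) · F(x) ≤ 0 for all x ∈ Ω. Let E = {x ∈ Ω : ∇V(x) · F(x) = 0} and let M be the largest invariant set contained in E. Then every solution x(·) starting in Ω approaches M as t → ∞: for every ε > 0 there exists T > 0 such that inf_{p ∈ M} ‖x(t) − p‖ < ε for all t > T. -/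
/-!
The forward trajectory `x` stays in the compact set `Ω`, so it approaches its ω-limit set, the set
of its cluster points at `t → ∞`; it suffices to show that this set is an invariant subset of `E`.
Invariance: near a cluster point `p`, the time-shifts `x (u k + ·)` with `x (u k) → p` converge, by Grönwall's
inequality for the field (Lipschitz on a neighbourhood of `Ω`), to any solution through `p`, in
either time direction. Inclusion in `E`: `V` decreases along `x`, so it takes one value on all
cluster points; hence it is constant along a (Picard–Lindelöf) solution through `p`, and
`⟪∇V p, F p⟫ = 0`.
-/

open scoped InnerProductSpace

/-- A set `S` is invariant with respect to the autonomous system `ẋ = F x` if every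
(globally defined) solution starting in `S` remains in `S` for all (past and future) time. -/
def IsInvariantSet {n : ℕ} (F : EuclideanSpace ℝ (Fin n) → EuclideanSpace ℝ (Fin n))
    (S : Set (EuclideanSpace ℝ (Fin n))) : Prop :=
  ∀ x : ℝ → EuclideanSpace ℝ (Fin n),
    (∀ t : ℝ, HasDerivAt x (F (x t)) t) → x 0 ∈ S → ∀ t : ℝ, x t ∈ S

/-- A set `S` is positively invariant with respect to the autonomous system `ẋ = F x` if
every solution starting in `S` remains in `S` for all future time. -/
def IsPosInvariantSet {n : ℕ} (F : EuclideanSpace ℝ (Fin n) → EuclideanSpace ℝ (Fin n))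
    (S : Set (EuclideanSpace ℝ (Fin n))) : Prop :=
  ∀ (x : ℝ → EuclideanSpace ℝ (Fin n)) (T : ℝ), 0 ≤ T →
    (∀ t ∈ Set.Icc (0 : ℝ) T, HasDerivAt x (F (x t)) t) → x 0 ∈ S → x T ∈ S

open Set Filter Metric Topology
open scoped NNReal

theorem LocallyLipschitzOn.exists_lipschitzOnWith_cthickening {α β : Type*}
    [PseudoMetricSpace α] [ProperSpace α] [PseudoMetricSpace β] {f : α → β} {D Ω : Set α}
    (hD : IsOpen D) (hf : LocallyLipschitzOn D f) (hΩ : IsCompact Ω) (hΩD : Ω ⊆ D) :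
    ∃ r > 0, ∃ L, LipschitzOnWith L f (cthickening r Ω) := by
  obtain ⟨r, hr, hrD⟩ := hΩ.exists_cthickening_subset_open hD hΩD
  exact ⟨r, hr, (hf.mono hrD).exists_lipschitzOnWith_of_compact hΩ.cthickening⟩

section Trajectories

variable {E : Type*} [NormedAddCommGroup E] [NormedSpace ℝ E] {G : E → E} {L : ℝ≥0}

theorem exists_hasDerivAt_Icc_of_lipschitzOnWith_closedBall [CompleteSpace E] {p : E} {r : ℝ}
    (hr : 0 < r) (hG : LipschitzOnWith L G (closedBall p r)) :
    ∃ ε > 0, ∃ y : ℝ → E, y 0 = p ∧ ∀ t ∈ Icc 0 ε, HasDerivAt y (G (y t)) t := by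
  set C : ℝ := ‖G p‖ + L * r
  have hC : 0 ≤ C := by positivity
  have hbound : ∀ z ∈ closedBall p r, ‖G z‖ ≤ C := fun z hz ↦
    calc ‖G z‖ ≤ ‖G p‖ + ‖G z - G p‖ := norm_le_norm_add_norm_sub' _ _
      _ ≤ ‖G p‖ + L * ‖z - p‖ := by gcongr; exact hG.norm_sub_le hz (mem_closedBall_self hr.le)
      _ ≤ ‖G p‖ + L * r := by gcongr; exact mem_closedBall_iff_norm.mp hz
  set ε := r / (C + 1)
  have hε : 0 < ε := by positivity
  have hpl : IsPicardLindelof (fun _ ↦ G) (tmin := -ε) (tmax := ε)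
      ⟨0, by constructor <;> linarith⟩ p ⟨r, hr.le⟩ 0 ⟨C, hC⟩ L := by
    refine .of_time_independent hbound hG ?_
    show C * max (ε - 0) (0 - -ε) ≤ r - 0
    rw [sub_zero, sub_zero, zero_sub, neg_neg, max_self, mul_div_assoc',
      div_le_iff₀ (by positivity)]
    nlinarith
  obtain ⟨y, hy0, hy⟩ := hpl.exists_eq_forall_mem_Icc_hasDerivWithinAt₀
  refine ⟨ε / 2, half_pos hε, y, hy0, fun t ht ↦ ?_⟩
  have ht' : t ∈ Ioo (-ε) ε := ⟨by linarith [ht.1], by linarith [ht.2]⟩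
  exact (hy t (Ioo_subset_Icc_self ht')).hasDerivAt (Icc_mem_nhds ht'.1 ht'.2)

theorem dist_le_mul_exp_of_hasDerivAt_of_lipschitzOnWith {K : Set E}
    (hG : LipschitzOnWith L G K) {b : ℝ} {f g : ℝ → E}
    (hf : ∀ s ∈ Icc 0 b, HasDerivAt f (G (f s)) s ∧ f s ∈ K)
    (hg : ∀ s ∈ Icc 0 b, HasDerivAt g (G (g s)) s ∧ g s ∈ K) {t : ℝ} (ht : t ∈ Icc 0 b) :
    dist (f t) (g t) ≤ dist (f 0) (g 0) * Real.exp (L * t) := by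
  simpa using dist_le_of_trajectories_ODE_of_mem (v := fun _ ↦ G) (s := fun _ ↦ K)
    (fun _ _ ↦ hG) (fun s hs ↦ (hf s hs).1.continuousAt.continuousWithinAt)
    (fun s hs ↦ (hf s (Ico_subset_Icc_self hs)).1.hasDerivWithinAt)
    (fun s hs ↦ (hf s (Ico_subset_Icc_self hs)).2)
    (fun s hs ↦ (hg s hs).1.continuousAt.continuousWithinAt)
    (fun s hs ↦ (hg s (Ico_subset_Icc_self hs)).1.hasDerivWithinAt)
    (fun s hs ↦ (hg s (Ico_subset_Icc_self hs)).2) le_rfl t ht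

theorem tendsto_of_tendsto_zero_of_lipschitzOnWith {K : Set E} (hG : LipschitzOnWith L G K)
    {b : ℝ} {y : ℝ → E} {z : ℕ → ℝ → E}
    (hy : ∀ s ∈ Icc 0 b, HasDerivAt y (G (y s)) s ∧ y s ∈ K)
    (hz : ∀ᶠ k in atTop, ∀ s ∈ Icc 0 b, HasDerivAt (z k) (G (z k s)) s ∧ z k s ∈ K)
    (h0 : Tendsto (fun k ↦ z k 0) atTop (𝓝 (y 0))) {t : ℝ} (ht : t ∈ Icc 0 b) :
    Tendsto (fun k ↦ z k t) atTop (𝓝 (y t)) := by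
  rw [tendsto_iff_dist_tendsto_zero] at h0 ⊢
  refine squeeze_zero' (.of_forall fun _ ↦ dist_nonneg) ?_
    (by simpa using h0.mul_const (Real.exp (L * t)))
  filter_upwards [hz] with k hk
  exact dist_le_mul_exp_of_hasDerivAt_of_lipschitzOnWith hG hk hy ht

/-- As long as `y` stays in `Ω`, uniform continuity keeps it in `cthickening r Ω` for a further
time `δ / 2`, where Grönwall's estimate makes it a limit of the `z k` and so puts it back into `Ω`.
-/
theorem mem_of_tendsto_zero_of_lipschitzOnWith_cthickening {Ω : Set E} (hΩ : IsClosed Ω)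
    {r : ℝ} (hr : 0 < r) (hG : LipschitzOnWith L G (cthickening r Ω)) {b : ℝ} {y : ℝ → E}
    {z : ℕ → ℝ → E} (hy : ∀ s ∈ Icc 0 b, HasDerivAt y (G (y s)) s)
    (hz : ∀ᶠ k in atTop, ∀ s ∈ Icc 0 b, HasDerivAt (z k) (G (z k s)) s ∧ z k s ∈ Ω)
    (h0 : Tendsto (fun k ↦ z k 0) atTop (𝓝 (y 0))) {t : ℝ} (ht : t ∈ Icc 0 b) : y t ∈ Ω := by
  obtain ⟨δ, hδ, hyδ⟩ := Metric.uniformContinuousOn_iff.mp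
    (isCompact_Icc.uniformContinuousOn_of_continuous
      fun s hs ↦ (hy s hs).continuousAt.continuousWithinAt) r hr
  suffices h : ∀ m : ℕ, ∀ t ∈ Icc 0 b, t ≤ m * (δ / 2) → y t ∈ Ω by
    obtain ⟨m, hm⟩ := exists_nat_ge (t / (δ / 2))
    exact h m t ht ((div_le_iff₀ (by positivity)).mp hm)
  intro m
  induction m with
  | zero =>
    intro t ht ht0
    obtain rfl : t = 0 := by simp only [CharP.cast_eq_zero, zero_mul] at ht0; linarith [ht.1]
    exact hΩ.mem_of_tendsto h0 (hz.mono fun k hk ↦ (hk 0 ⟨le_rfl, ht.2⟩).2)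
  | succ m ih =>
    intro t ht htm
    set c : ℝ := m * (δ / 2)
    rcases le_or_gt t c with htc | hct
    · exact ih t ht htc
    have htc : t ≤ c + δ / 2 := by rwa [Nat.cast_succ, add_mul, one_mul] at htm
    have hc : c ∈ Icc 0 b := ⟨by positivity, hct.le.trans ht.2⟩
    have htb : Icc 0 t ⊆ Icc 0 b := Icc_subset_Icc_right ht.2
    have hyK : ∀ s ∈ Icc 0 t, y s ∈ cthickening r Ω := by
      intro s hs
      rcases le_or_gt s c with hsc | hcs
      · exact self_subset_cthickening Ω (ih s (htb hs) hsc)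
      · refine mem_cthickening_of_dist_le _ _ _ _ (ih c hc le_rfl) (hyδ s (htb hs) c hc ?_).le
        rw [Real.dist_eq, abs_of_pos (by linarith)]
        linarith [hs.2]
    have hzK : ∀ᶠ k in atTop, ∀ s ∈ Icc 0 t,
        HasDerivAt (z k) (G (z k s)) s ∧ z k s ∈ cthickening r Ω :=
      hz.mono fun k hk s hs ↦ ⟨(hk s (htb hs)).1, self_subset_cthickening Ω (hk s (htb hs)).2⟩
    refine hΩ.mem_of_tendsto (tendsto_of_tendsto_zero_of_lipschitzOnWith hG
      (fun s hs ↦ ⟨hy s (htb hs), hyK s hs⟩) hzK h0 ⟨ht.1, le_rfl⟩) ?_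
    exact hz.mono fun k hk ↦ (hk t ht).2

theorem tendsto_of_tendsto_zero_of_lipschitzOnWith_cthickening {Ω : Set E} (hΩ : IsClosed Ω)
    {r : ℝ} (hr : 0 < r) (hG : LipschitzOnWith L G (cthickening r Ω)) {b : ℝ} {y : ℝ → E}
    {z : ℕ → ℝ → E} (hy : ∀ s ∈ Icc 0 b, HasDerivAt y (G (y s)) s)
    (hz : ∀ᶠ k in atTop, ∀ s ∈ Icc 0 b, HasDerivAt (z k) (G (z k s)) s ∧ z k s ∈ Ω)
    (h0 : Tendsto (fun k ↦ z k 0) atTop (𝓝 (y 0))) {t : ℝ} (ht : t ∈ Icc 0 b) :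
    Tendsto (fun k ↦ z k t) atTop (𝓝 (y t)) :=
  tendsto_of_tendsto_zero_of_lipschitzOnWith (hG.mono (self_subset_cthickening Ω))
    (fun s hs ↦ ⟨hy s hs, mem_of_tendsto_zero_of_lipschitzOnWith_cthickening hΩ hr hG hy hz h0 hs⟩)
    hz h0 ht

theorem mapClusterPt_atTop_of_forward_solution {Ω : Set E} (hΩ : IsClosed Ω) {r : ℝ}
    (hr : 0 < r) (hG : LipschitzOnWith L G (cthickening r Ω)) {x : ℝ → E}
    (hx : ∀ t, 0 ≤ t → HasDerivAt x (G (x t)) t) (hxΩ : ∀ t, 0 ≤ t → x t ∈ Ω)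
    {b : ℝ} {y : ℝ → E} (hy : ∀ s ∈ Icc 0 b, HasDerivAt y (G (y s)) s)
    (hy0 : MapClusterPt (y 0) atTop x) {t : ℝ} (ht : t ∈ Icc 0 b) :
    MapClusterPt (y t) atTop x := by
  obtain ⟨u, hxu, hu⟩ := hy0.exists_seq_tendsto
  refine .of_comp (tendsto_atTop_add_const_right _ t hu) (Tendsto.mapClusterPt ?_)
  refine tendsto_of_tendsto_zero_of_lipschitzOnWith_cthickening (z := fun k s ↦ x (u k + s))
    hΩ hr hG hy ?_ (by simpa [Function.comp_def] using hxu) ht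
  filter_upwards [hu.eventually_ge_atTop 0] with k hk s hs
  have hks : 0 ≤ u k + s := by linarith [hs.1]
  exact ⟨(hx _ hks).comp_const_add (u k) s, hxΩ _ hks⟩

theorem mapClusterPt_atTop_of_backward_solution {Ω : Set E} (hΩ : IsClosed Ω) {r : ℝ}
    (hr : 0 < r) (hG : LipschitzOnWith L G (cthickening r Ω)) {x : ℝ → E}
    (hx : ∀ t, 0 ≤ t → HasDerivAt x (G (x t)) t) (hxΩ : ∀ t, 0 ≤ t → x t ∈ Ω)
    {b : ℝ} {y : ℝ → E} (hy : ∀ s ∈ Icc (-b) 0, HasDerivAt y (G (y s)) s)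
    (hy0 : MapClusterPt (y 0) atTop x) {t : ℝ} (ht : t ∈ Icc (-b) 0) :
    MapClusterPt (y t) atTop x := by
  obtain ⟨u, hxu, hu⟩ := hy0.exists_seq_tendsto
  have hGneg : LipschitzOnWith L (fun z ↦ -G z) (cthickening r Ω) := fun z hz w hw ↦ by
    simpa only [edist_neg_neg] using hG hz hw
  have hyneg : ∀ s ∈ Icc 0 b, HasDerivAt (fun s ↦ y (-s)) (-G (y (-s))) s := fun s hs ↦ by
    simpa using (hy (0 - s) ⟨by linarith [hs.2], by linarith [hs.1]⟩).comp_const_sub 0 s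
  have hz : ∀ᶠ k in atTop, ∀ s ∈ Icc 0 b,
      HasDerivAt (fun s ↦ x (u k - s)) (-G (x (u k - s))) s ∧ x (u k - s) ∈ Ω := by
    filter_upwards [hu.eventually_ge_atTop b] with k hk s hs
    have hks : 0 ≤ u k - s := by linarith [hs.2]
    exact ⟨(hx _ hks).comp_const_sub (u k) s, hxΩ _ hks⟩
  have hmem : -t ∈ Icc 0 b := ⟨by linarith [ht.2], by linarith [ht.1]⟩
  refine .of_comp (tendsto_atTop_add_const_right _ t hu) (Tendsto.mapClusterPt ?_)
  simpa [Function.comp_def, sub_eq_add_neg] using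
    tendsto_of_tendsto_zero_of_lipschitzOnWith_cthickening hΩ hr hGneg hyneg hz
      (by simpa [Function.comp_def] using hxu) hmem

end Trajectories

theorem isInvariantSet_setOf_mapClusterPt {n : ℕ}
    {F : EuclideanSpace ℝ (Fin n) → EuclideanSpace ℝ (Fin n)} {Ω : Set (EuclideanSpace ℝ (Fin n))}
    (hΩ : IsClosed Ω) {r : ℝ} (hr : 0 < r) {L : ℝ≥0} (hF : LipschitzOnWith L F (cthickening r Ω))
    {x : ℝ → EuclideanSpace ℝ (Fin n)} (hx : ∀ t, 0 ≤ t → HasDerivAt x (F (x t)) t)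
    (hxΩ : ∀ t, 0 ≤ t → x t ∈ Ω) :
    IsInvariantSet F {p | MapClusterPt p atTop x} := by
  intro y hy hy0 t
  rcases le_total 0 t with ht | ht
  · exact mapClusterPt_atTop_of_forward_solution hΩ hr hF hx hxΩ (fun s _ ↦ hy s) hy0 ⟨ht, le_rfl⟩
  · exact mapClusterPt_atTop_of_backward_solution hΩ hr hF hx hxΩ (b := -t) (fun s _ ↦ hy s) hy0
      ⟨(neg_neg t).le, ht⟩

theorem AntitoneOn.eq_of_mapClusterPt_atTop {ι α : Type*} [Preorder ι] [LinearOrder α]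
    [TopologicalSpace α] [OrderClosedTopology α] {f : ι → α} {a : ι} (hf : AntitoneOn f (Ici a))
    {b c : α} (hb : MapClusterPt b atTop f) (hc : MapClusterPt c atTop f) : b = c := by
  have hle : ∀ b c, MapClusterPt b atTop f → MapClusterPt c atTop f → b ≤ c := by
    intro b c hb hc
    have hbf : ∀ s, a ≤ s → b ≤ f s := fun s hs ↦ isClosed_Iic.mem_of_mapClusterPt hb
      ((eventually_ge_atTop s).mono fun t hst ↦ hf hs (hs.trans hst) hst)
    exact isClosed_Ici.mem_of_mapClusterPt hc ((eventually_ge_atTop a).mono hbf)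
  exact (hle b c hb hc).antisymm (hle c b hc hb)

theorem Metric.eventually_infDist_lt_of_forall_mapClusterPt_mem {ι X : Type*} [PseudoMetricSpace X]
    {l : Filter ι} {x : ι → X} {Ω M : Set X} (hΩ : IsCompact Ω) (hxΩ : ∀ᶠ t in l, x t ∈ Ω)
    (hM : ∀ p, MapClusterPt p l x → p ∈ M) {ε : ℝ} (hε : 0 < ε) :
    ∀ᶠ t in l, infDist (x t) M < ε := by
  by_contra h
  have hK : IsCompact (Ω ∩ {q | ε ≤ infDist q M}) :=
    hΩ.inter_right (isClosed_le continuous_const (continuous_infDist_pt M))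
  obtain ⟨p, ⟨-, hpε⟩, hp⟩ := hK.exists_mapClusterPt_of_frequently
    ((not_eventually.mp h).and_eventually hxΩ |>.mono fun t ht ↦ ⟨ht.2, not_lt.mp ht.1⟩)
  exact (show ε ≤ infDist p M from hpε).not_gt (by rwa [infDist_zero_of_mem (hM p hp)])

section Lyapunov

variable {E : Type*} [NormedAddCommGroup E] [InnerProductSpace ℝ E] [CompleteSpace E]
  {V : E → ℝ} {G : E → E} {Ω : Set E} {x : ℝ → E}

theorem HasGradientAt.hasDerivAt_comp {g v : E} {γ : ℝ → E} {t : ℝ}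
    (hV : HasGradientAt V g (γ t)) (hγ : HasDerivAt γ v t) :
    HasDerivAt (V ∘ γ) ⟪g, v⟫_ℝ t := by
  simpa using (hasGradientAt_iff_hasFDerivAt.mp hV).comp_hasDerivAt t hγ

theorem antitoneOn_comp_of_inner_gradient_nonpos (hV : ∀ p ∈ Ω, DifferentiableAt ℝ V p)
    (hVG : ∀ p ∈ Ω, ⟪gradient V p, G p⟫_ℝ ≤ 0) (hx : ∀ t, 0 ≤ t → HasDerivAt x (G (x t)) t)
    (hxΩ : ∀ t, 0 ≤ t → x t ∈ Ω) : AntitoneOn (V ∘ x) (Ici 0) := by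
  have hVx : ∀ t, 0 ≤ t → HasDerivAt (V ∘ x) ⟪gradient V (x t), G (x t)⟫_ℝ t := fun t ht ↦
    (hV _ (hxΩ t ht)).hasGradientAt.hasDerivAt_comp (hx t ht)
  exact antitoneOn_of_hasDerivWithinAt_nonpos (convex_Ici 0)
    (fun t ht ↦ (hVx t ht).continuousAt.continuousWithinAt)
    (fun t ht ↦ (hVx t (interior_subset ht)).hasDerivWithinAt)
    (fun t ht ↦ hVG _ (hxΩ t (interior_subset ht)))

/-- A local solution through `p` stays in the ω-limit set of `x`, on which `V` is constant. -/
theorem inner_gradient_eq_zero_of_mapClusterPt (hΩ : IsClosed Ω) {r : ℝ} (hr : 0 < r)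
    {L : ℝ≥0} (hG : LipschitzOnWith L G (cthickening r Ω)) (hV : ∀ p ∈ Ω, DifferentiableAt ℝ V p)
    (hVG : ∀ p ∈ Ω, ⟪gradient V p, G p⟫_ℝ ≤ 0) (hx : ∀ t, 0 ≤ t → HasDerivAt x (G (x t)) t)
    (hxΩ : ∀ t, 0 ≤ t → x t ∈ Ω) {p : E} (hp : MapClusterPt p atTop x) :
    ⟪gradient V p, G p⟫_ℝ = 0 := by
  have hω : ∀ q, MapClusterPt q atTop x → q ∈ Ω := fun q hq ↦
    hΩ.mem_of_mapClusterPt hq ((eventually_ge_atTop 0).mono hxΩ)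
  have hVω : ∀ q, MapClusterPt q atTop x → MapClusterPt (V q) atTop (V ∘ x) := fun q hq ↦
    hq.continuousAt_comp (hV q (hω q hq)).continuousAt
  have hanti := antitoneOn_comp_of_inner_gradient_nonpos hV hVG hx hxΩ
  obtain ⟨ε, hε, y, rfl, hy⟩ := exists_hasDerivAt_Icc_of_lipschitzOnWith_closedBall hr
    (hG.mono (closedBall_subset_cthickening (hω _ hp) r))
  have hVy : ∀ t ∈ Icc 0 ε, (V ∘ y) t = V (y 0) := fun t ht ↦ hanti.eq_of_mapClusterPt_atTop
    (hVω _ (mapClusterPt_atTop_of_forward_solution hΩ hr hG hx hxΩ hy hp ht)) (hVω _ hp)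
  have hderiv : HasDerivAt (V ∘ y) ⟪gradient V (y 0), G (y 0)⟫_ℝ 0 :=
    (hV _ (hω _ hp)).hasGradientAt.hasDerivAt_comp (hy 0 ⟨le_rfl, hε.le⟩)
  exact (uniqueDiffOn_Icc hε 0 ⟨le_rfl, hε.le⟩).eq_deriv _ hderiv.hasDerivWithinAt
    ((hasDerivWithinAt_const 0 _ (V (y 0))).congr hVy (hVy 0 ⟨le_rfl, hε.le⟩))

end Lyapunov

theorem lasalle_invariance_principle_general
    {n : ℕ} {D : Set (EuclideanSpace ℝ (Fin n))}
    (hD : IsOpen D)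
    (F : EuclideanSpace ℝ (Fin n) → EuclideanSpace ℝ (Fin n))
    (hFlip : ∀ x ∈ D, ∃ K : NNReal, ∃ s ∈ nhdsWithin x D, LipschitzOnWith K F s)
    (Ω : Set (EuclideanSpace ℝ (Fin n)))
    (hΩD : Ω ⊆ D) (hΩcomp : IsCompact Ω)
    (hΩinv : IsPosInvariantSet F Ω)
    (V : EuclideanSpace ℝ (Fin n) → ℝ)
    (hV : ContDiffOn ℝ 1 V D)
    (hVdot : ∀ x ∈ Ω, ⟪gradient V x, F x⟫_ℝ ≤ 0)
    (E : Set (EuclideanSpace ℝ (Fin n)))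
    (hE : E = {x ∈ Ω | ⟪gradient V x, F x⟫_ℝ = 0})
    (M : Set (EuclideanSpace ℝ (Fin n)))
    (hMmax : ∀ M' : Set (EuclideanSpace ℝ (Fin n)),
      M' ⊆ E → IsInvariantSet F M' → M' ⊆ M) :
    ∀ x : ℝ → EuclideanSpace ℝ (Fin n),
      (∀ t : ℝ, 0 ≤ t → HasDerivAt x (F (x t)) t) → x 0 ∈ Ω →
      ∀ ε > 0, ∃ T > 0, ∀ t > T, Metric.infDist (x t) M < ε := by
  intro x hx hx0 ε hε
  have hxΩ : ∀ t, 0 ≤ t → x t ∈ Ω := fun t ht ↦ hΩinv x t ht (fun s hs ↦ hx s hs.1) hx0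
  have hΩ := hΩcomp.isClosed
  obtain ⟨r, hr, L, hL⟩ :=
    LocallyLipschitzOn.exists_lipschitzOnWith_cthickening hD (fun p hp ↦ hFlip p hp) hΩcomp hΩD
  have hVdiff : ∀ p ∈ Ω, DifferentiableAt ℝ V p := fun p hp ↦
    (hV.contDiffAt (hD.mem_nhds (hΩD hp))).differentiableAt one_ne_zero
  have hωE : {p | MapClusterPt p atTop x} ⊆ E := fun p hp ↦ hE ▸
    ⟨hΩ.mem_of_mapClusterPt hp ((eventually_ge_atTop 0).mono hxΩ),
      inner_gradient_eq_zero_of_mapClusterPt hΩ hr hL hVdiff hVdot hx hxΩ hp⟩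
  have hωM := hMmax _ hωE (isInvariantSet_setOf_mapClusterPt hΩ hr hL hx hxΩ)
  obtain ⟨T, hT⟩ := eventually_atTop.mp <| eventually_infDist_lt_of_forall_mapClusterPt_mem hΩcomp
    ((eventually_ge_atTop 0).mono hxΩ) hωM hε
  exact ⟨max T 1, by positivity, fun t ht ↦ hT t ((le_max_left _ _).trans ht.le)⟩

/-- **LaSalle's invariance principle.** Let `Ω ⊆ D` be a compact positively invariant set
for `ẋ = F x` with `F` locally Lipschitz on the open set `D`, let `V` be continuously
differentiable with `V̇ = ⟪∇V, F⟫ ≤ 0` on `Ω`, let `E = {x ∈ Ω | V̇ x = 0}` and let `M` be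
the largest invariant set contained in `E`. Then every solution starting in `Ω`
approaches `M` as `t → ∞`. -/
theorem lasalle_invariance_principle
    {n : ℕ} {D : Set (EuclideanSpace ℝ (Fin n))}
    (hD : IsOpen D)
    (F : EuclideanSpace ℝ (Fin n) → EuclideanSpace ℝ (Fin n))
    (hFlip : ∀ x ∈ D, ∃ K : NNReal, ∃ s ∈ nhdsWithin x D, LipschitzOnWith K F s)
    (Ω : Set (EuclideanSpace ℝ (Fin n)))
    (hΩD : Ω ⊆ D) (hΩcomp : IsCompact Ω)
    (hΩinv : IsPosInvariantSet F Ω)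
    (V : EuclideanSpace ℝ (Fin n) → ℝ)
    (hV : ContDiffOn ℝ 1 V D)
    (hVdot : ∀ x ∈ Ω, ⟪gradient V x, F x⟫_ℝ ≤ 0)
    (E : Set (EuclideanSpace ℝ (Fin n)))
    (hE : E = {x ∈ Ω | ⟪gradient V x, F x⟫_ℝ = 0})
    (M : Set (EuclideanSpace ℝ (Fin n)))
    (hME : M ⊆ E) (hMinv : IsInvariantSet F M)
    (hMmax : ∀ M' : Set (EuclideanSpace ℝ (Fin n)),
      M' ⊆ E → IsInvariantSet F M' → M' ⊆ M) :
    ∀ x : ℝ → EuclideanSpace ℝ (Fin n),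
      (∀ t : ℝ, 0 ≤ t → HasDerivAt x (F (x t)) t) → x 0 ∈ Ω →
      ∀ ε > 0, ∃ T > 0, ∀ t > T, Metric.infDist (x t) M < ε :=
  lasalle_invariance_principle_general hD F hFlip Ω hΩD hΩcomp hΩinv V hV hVdot E hE M hMmax
end

section
/- Let A ∈ ℝ^{n×n}, B ∈ ℝ^{n×m}, C ∈ ℝ^{p×n}, D ∈ ℝ^{p×m}, and let Q = Qᵀ ∈ ℝ^{p×p}, S ∈ ℝ^{p×m}, R = Rᵀ ∈ ℝ^{m×m}. Suppose there exists a symmetric positive definite matrix P ∈ ℝ^{n×n} such that the block matrix [[AᵀP + PA − CᵀQC, PB − CᵀS − CᵀQD], [(PB − CᵀS − CᵀQD)ᵀ, −DᵀQD − (DᵀS + SᵀD) − R]] is negative semidefinite. Then for every T ≥ 0, every continuous input u : [0,T] → ℝ^m, and every continuously differentiable x : [0,T] → ℝⁿ satisfying ẋ(t) = A x(t) + B u(t), with output y(t) = C x(t) + D u(t), the dissipation inequality ∫₀ᵀ (y(t)ᵀ Q y(t) + u(t)ᵀ R u(t) + 2 y(t)ᵀ S u(t)) dt ≥ x(T)ᵀ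 P x(T) − x(0)ᵀ P x(0) holds; that is, the linear system is QSR-dissipative with quadratic storage function V(x) = xᵀ P x. -/
/-!
With `V x = xᵀ P x`, the derivative of `V` along `ẋ = A x + B u` minus the supply rate at
`(C x + D u, u)` is exactly the quadratic form of the LMI block matrix at `(x, u)`, hence
nonpositive. The dissipation inequality then follows from the one-sided fundamental theorem of
calculus: `V (x T) - V (x 0)` is at most the integral of any integrable upper bound of the
derivative.
-/

open Matrix

section Calculus

variable {𝕜 : Type*} [NontriviallyNormedField 𝕜] {ι κ : Type*} [Fintype ι]
  {f g : 𝕜 → ι → 𝕜} {f' g' : ι → 𝕜} {s : Set 𝕜} {t : 𝕜}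

theorem HasDerivWithinAt.dotProduct (hf : HasDerivWithinAt f f' s t)
    (hg : HasDerivWithinAt g g' s t) :
    HasDerivWithinAt (fun τ => f τ ⬝ᵥ g τ) (f' ⬝ᵥ g t + f t ⬝ᵥ g') s t :=
  (HasDerivWithinAt.fun_sum fun i _ =>
    (hasDerivWithinAt_pi.1 hf i).fun_mul (hasDerivWithinAt_pi.1 hg i)).congr_deriv
    Finset.sum_add_distrib

theorem HasDerivWithinAt.matrix_mulVec (M : Matrix κ ι 𝕜) (hf : HasDerivWithinAt f f' s t) :
    HasDerivWithinAt (fun τ => M *ᵥ f τ) (M *ᵥ f') s t :=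
  hasDerivWithinAt_pi.2 fun k =>
    ((hasDerivWithinAt_const t s (M k)).dotProduct hf).congr_deriv (by simp [mulVec])

end Calculus

theorem mulVec_dotProduct {α ι κ : Type*} [CommSemiring α] [Fintype ι] [Fintype κ]
    (M : Matrix ι κ α) (v : κ → α) (w : ι → α) : (M *ᵥ v) ⬝ᵥ w = v ⬝ᵥ (Mᵀ *ᵥ w) := by
  rw [dotProduct_comm, dotProduct_mulVec, ← mulVec_transpose, dotProduct_comm]

section Dissipativity

variable {α σ κ ι : Type*} [CommRing α] [Fintype σ] [Fintype κ] [Fintype ι]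
  (A : Matrix σ σ α) (B : Matrix σ κ α) (C : Matrix ι σ α) (D : Matrix ι κ α)
  (Q : Matrix ι ι α) (S : Matrix ι κ α) (R : Matrix κ κ α) (P : Matrix σ σ α)

def qsrSupply (y : ι → α) (u : κ → α) : α :=
  y ⬝ᵥ (Q *ᵥ y) + u ⬝ᵥ (R *ᵥ u) + 2 * (y ⬝ᵥ (S *ᵥ u))

def dissipationMatrix : Matrix (σ ⊕ κ) (σ ⊕ κ) α :=
  fromBlocks (Aᵀ * P + P * A - Cᵀ * Q * C) (P * B - Cᵀ * S - Cᵀ * Q * D)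
    (P * B - Cᵀ * S - Cᵀ * Q * D)ᵀ (-(Dᵀ * Q * D) - (Dᵀ * S + Sᵀ * D) - R)

@[fun_prop]
theorem ContinuousOn.qsrSupply [TopologicalSpace α] [IsTopologicalRing α] {X : Type*}
    [TopologicalSpace X] {y : X → ι → α} {u : X → κ → α} {s : Set X} (hy : ContinuousOn y s)
    (hu : ContinuousOn u s) : ContinuousOn (fun z => _root_.qsrSupply Q S R (y z) (u z)) s := by
  unfold _root_.qsrSupply
  fun_prop

variable {A B C D Q S R P}

theorem dotProduct_dissipationMatrix_mulVec (hQ : Q.IsSymm) (hP : P.IsSymm)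
    (x : σ → α) (u : κ → α) :
    Sum.elim x u ⬝ᵥ (dissipationMatrix A B C D Q S R P *ᵥ Sum.elim x u) =
      (A *ᵥ x + B *ᵥ u) ⬝ᵥ (P *ᵥ x) + x ⬝ᵥ (P *ᵥ (A *ᵥ x + B *ᵥ u))
        - qsrSupply Q S R (C *ᵥ x + D *ᵥ u) u := by
  have hux (M : Matrix κ σ α) : u ⬝ᵥ (M *ᵥ x) = x ⬝ᵥ (Mᵀ *ᵥ u) := by
    rw [dotProduct_comm, mulVec_dotProduct]
  have huu : u ⬝ᵥ ((Sᵀ * D) *ᵥ u) = u ⬝ᵥ ((Dᵀ * S) *ᵥ u) := by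
    rw [dotProduct_comm, mulVec_dotProduct, transpose_mul, transpose_transpose]
  simp only [dissipationMatrix, qsrSupply, fromBlocks_mulVec, sumElim_dotProduct_sumElim,
    Sum.elim_comp_inl, Sum.elim_comp_inr, add_mulVec, sub_mulVec, neg_mulVec, mulVec_add,
    dotProduct_add, add_dotProduct, dotProduct_sub, dotProduct_neg, mulVec_dotProduct, hux, huu,
    mulVec_mulVec, transpose_mul, transpose_transpose, transpose_sub, hQ.eq, hP.eq,
    Matrix.mul_assoc]
  ring

theorem storage_derivative_le_qsrSupply [PartialOrder α] [IsOrderedRing α] [StarRing α]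
    [TrivialStar α] (hQ : Q.IsSymm) (hP : P.IsSymm)
    (hLMI : (-dissipationMatrix A B C D Q S R P).PosSemidef) (x : σ → α) (u : κ → α) :
    (A *ᵥ x + B *ᵥ u) ⬝ᵥ (P *ᵥ x) + x ⬝ᵥ (P *ᵥ (A *ᵥ x + B *ᵥ u)) ≤
      qsrSupply Q S R (C *ᵥ x + D *ᵥ u) u := by
  have h := hLMI.dotProduct_mulVec_nonneg (Sum.elim x u)
  rwa [star_trivial, neg_mulVec, dotProduct_neg, dotProduct_dissipationMatrix_mulVec hQ hP,
    neg_nonneg, sub_nonpos] at h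

end Dissipativity

theorem lti_qsr_dissipative_of_lmi_general
    {n m p : ℕ}
    (A : Matrix (Fin n) (Fin n) ℝ) (B : Matrix (Fin n) (Fin m) ℝ)
    (C : Matrix (Fin p) (Fin n) ℝ) (D : Matrix (Fin p) (Fin m) ℝ)
    (Q : Matrix (Fin p) (Fin p) ℝ) (S : Matrix (Fin p) (Fin m) ℝ)
    (R : Matrix (Fin m) (Fin m) ℝ)
    (hQ : Q.IsSymm)
    (P : Matrix (Fin n) (Fin n) ℝ) (hP : P.PosDef)
    (hLMI : (-(Matrix.fromBlocks
        (Aᵀ * P + P * A - Cᵀ * Q * C)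
        (P * B - Cᵀ * S - Cᵀ * Q * D)
        (P * B - Cᵀ * S - Cᵀ * Q * D)ᵀ
        (-(Dᵀ * Q * D) - (Dᵀ * S + Sᵀ * D) - R))).PosSemidef)
    (T : ℝ) (hT : 0 ≤ T)
    (u : ℝ → Fin m → ℝ) (hu : ContinuousOn u (Set.Icc 0 T))
    (x : ℝ → Fin n → ℝ)
    (hx : ∀ t ∈ Set.Icc (0 : ℝ) T,
      HasDerivWithinAt x (A *ᵥ x t + B *ᵥ u t) (Set.Icc (0 : ℝ) T) t) :
    x T ⬝ᵥ (P *ᵥ x T) - x 0 ⬝ᵥ (P *ᵥ x 0) ≤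
      ∫ t in (0:ℝ)..T,
        ((C *ᵥ x t + D *ᵥ u t) ⬝ᵥ (Q *ᵥ (C *ᵥ x t + D *ᵥ u t))
          + u t ⬝ᵥ (R *ᵥ u t)
          + 2 * ((C *ᵥ x t + D *ᵥ u t) ⬝ᵥ (S *ᵥ u t))) := by
  have hPsymm : P.IsSymm := by simpa using hP.isHermitian
  have hxc : ContinuousOn x (Set.Icc 0 T) := fun t ht => (hx t ht).continuousWithinAt
  refine intervalIntegral.sub_le_integral_of_hasDeriv_right_of_le
    (g := fun t => x t ⬝ᵥ (P *ᵥ x t)) hT (by fun_prop) (fun t ht => ?_)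
    (ContinuousOn.integrableOn_Icc (by fun_prop))
    (fun t _ => storage_derivative_le_qsrSupply hQ hPsymm hLMI (x t) (u t))
  have hxt := (hx t (Set.Ioo_subset_Icc_self ht)).mono_of_mem_nhdsWithin
    (Icc_mem_nhdsGT_of_mem ⟨ht.1.le, ht.2⟩)
  exact hxt.dotProduct (hxt.matrix_mulVec P)

/-- **QSR-dissipativity of an LTI system from the dissipativity LMI.** If there is a
symmetric positive definite `P` such that the dissipativity LMI block matrix is negative
semidefinite, then along every trajectory of `ẋ = A x + B u`, `y = C x + D u` the
dissipation inequality
`∫₀ᵀ (yᵀ Q y + uᵀ R u + 2 yᵀ S u) dt ≥ x(T)ᵀ P x(T) − x(0)ᵀ P x(0)` holds,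
i.e. the system is QSR-dissipative with quadratic storage function `V(x) = xᵀ P x`. -/
theorem lti_qsr_dissipative_of_lmi
    {n m p : ℕ}
    (A : Matrix (Fin n) (Fin n) ℝ) (B : Matrix (Fin n) (Fin m) ℝ)
    (C : Matrix (Fin p) (Fin n) ℝ) (D : Matrix (Fin p) (Fin m) ℝ)
    (Q : Matrix (Fin p) (Fin p) ℝ) (S : Matrix (Fin p) (Fin m) ℝ)
    (R : Matrix (Fin m) (Fin m) ℝ)
    (hQ : Q.IsSymm) (hR : R.IsSymm)
    (P : Matrix (Fin n) (Fin n) ℝ) (hP : P.PosDef)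
    (hLMI : (-(Matrix.fromBlocks
        (Aᵀ * P + P * A - Cᵀ * Q * C)
        (P * B - Cᵀ * S - Cᵀ * Q * D)
        (P * B - Cᵀ * S - Cᵀ * Q * D)ᵀ
        (-(Dᵀ * Q * D) - (Dᵀ * S + Sᵀ * D) - R))).PosSemidef)
    (T : ℝ) (hT : 0 ≤ T)
    (u : ℝ → Fin m → ℝ) (hu : ContinuousOn u (Set.Icc 0 T))
    (x : ℝ → Fin n → ℝ)
    (hx : ∀ t ∈ Set.Icc (0 : ℝ) T,
      HasDerivWithinAt x (A *ᵥ x t + B *ᵥ u t) (Set.Icc (0 : ℝ) T) t) :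
    x T ⬝ᵥ (P *ᵥ x T) - x 0 ⬝ᵥ (P *ᵥ x 0) ≤
      ∫ t in (0:ℝ)..T,
        ((C *ᵥ x t + D *ᵥ u t) ⬝ᵥ (Q *ᵥ (C *ᵥ x t + D *ᵥ u t))
          + u t ⬝ᵥ (R *ᵥ u t)
          + 2 * ((C *ᵥ x t + D *ᵥ u t) ⬝ᵥ (S *ᵥ u t))) :=
  lti_qsr_dissipative_of_lmi_general A B C D Q S R hQ P hP hLMI T hT u hu x hx
end

section
/- Let n, m, p ∈ ℕ, let C ∈ ℝ^{p×n}, D ∈ ℝ^{p×m}, let Q = Qᵀ ∈ ℝ^{p×p}, S ∈ ℝ^{p×m}, R = Rᵀ ∈ ℝ^{m×m}, and let Δ be a symmetric matrix of size (n+m+n) × (n+m+n). Suppose there exist a symmetric positive semidefinite matrix X ∈ ℝ^{n×n} and a scalar α ≥ 0 such that for all x ∈ ℝⁿ, u ∈ ℝ^m, w ∈ ℝⁿ, with q = [x; u] and y = C x + D u, the inequality wᵀ X w − xᵀ X x − [y; u]ᵀ [[Q, S], [Sᵀ, R]] [y; u] − α [q; w]ᵀ Δ [q; w] ≤ 0 holds.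 Then for every matrix M = [A B] ∈ ℝ^{n×(n+m)} satisfying the quadratic uncertainty description [I; M]ᵀ Δ [I; M] ⪯ 0, and for all x ∈ ℝⁿ, u ∈ ℝ^m, setting w = A x + B u and y = C x + D u, the discrete dissipation inequality wᵀ X w − xᵀ X x ≤ yᵀ Q y + uᵀ R u + 2 yᵀ S u holds. In other words, every linear system whose matrices lie in the ellipsoidal set membership is QSR-dissipative with storage function V(x) = xᵀ X x. -/
open Matrix

/-- **S-procedure based dissipativity verification for an ellipsoidal set membership.**
If there exist `X ⪰ 0` and `α ≥ 0` such that the S-procedure inequality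
`wᵀXw − xᵀXx − [y;u]ᵀ[[Q,S],[Sᵀ,R]][y;u] − α [q;w]ᵀ Δ [q;w] ≤ 0` holds for all
`x, u, w` (with `q = [x;u]` and `y = Cx + Du`), then every linear system `[A B] = M`
in the ellipsoidal set membership `{M : [I;M]ᵀ Δ [I;M] ⪯ 0}` satisfies the discrete
dissipation inequality `wᵀXw − xᵀXx ≤ yᵀQy + uᵀRu + 2yᵀSu` with `w = Ax + Bu`, i.e.
is QSR-dissipative with storage function `V(x) = xᵀXx`. -/
theorem set_membership_qsr_dissipative
    {n m p : ℕ}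
    (C : Matrix (Fin p) (Fin n) ℝ) (D : Matrix (Fin p) (Fin m) ℝ)
    (Q : Matrix (Fin p) (Fin p) ℝ) (S : Matrix (Fin p) (Fin m) ℝ)
    (R : Matrix (Fin m) (Fin m) ℝ)
    (hQ : Q.IsSymm) (hR : R.IsSymm)
    (Δ : Matrix ((Fin n ⊕ Fin m) ⊕ Fin n) ((Fin n ⊕ Fin m) ⊕ Fin n) ℝ)
    (hΔ : Δ.IsSymm)
    (X : Matrix (Fin n) (Fin n) ℝ) (hX : X.PosSemidef)
    (α : ℝ) (hα : 0 ≤ α)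
    (hS : ∀ (x : Fin n → ℝ) (u : Fin m → ℝ) (w : Fin n → ℝ),
      (w ⬝ᵥ (X *ᵥ w)) - (x ⬝ᵥ (X *ᵥ x))
        - (Sum.elim (C *ᵥ x + D *ᵥ u) u ⬝ᵥ
            ((Matrix.fromBlocks Q S Sᵀ R) *ᵥ Sum.elim (C *ᵥ x + D *ᵥ u) u))
        - α * (Sum.elim (Sum.elim x u) w ⬝ᵥ (Δ *ᵥ Sum.elim (Sum.elim x u) w)) ≤ 0)
    (M : Matrix (Fin n) (Fin n ⊕ Fin m) ℝ)
    (hM : ∀ q : Fin n ⊕ Fin m → ℝ,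
      Sum.elim q (M *ᵥ q) ⬝ᵥ (Δ *ᵥ Sum.elim q (M *ᵥ q)) ≤ 0) :
    ∀ (x : Fin n → ℝ) (u : Fin m → ℝ),
      ((M *ᵥ Sum.elim x u) ⬝ᵥ (X *ᵥ (M *ᵥ Sum.elim x u))) - (x ⬝ᵥ (X *ᵥ x)) ≤
        (C *ᵥ x + D *ᵥ u) ⬝ᵥ (Q *ᵥ (C *ᵥ x + D *ᵥ u)) + u ⬝ᵥ (R *ᵥ u)
          + 2 * ((C *ᵥ x + D *ᵥ u) ⬝ᵥ (S *ᵥ u)) := by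
  intro x u
  have h1 := hS x u (M *ᵥ Sum.elim x u)
  have h2 := hM (Sum.elim x u)
  have h3 : α * (Sum.elim (Sum.elim x u) (M *ᵥ Sum.elim x u) ⬝ᵥ
      (Δ *ᵥ Sum.elim (Sum.elim x u) (M *ᵥ Sum.elim x u))) ≤ 0 :=
    mul_nonpos_of_nonneg_of_nonpos hα h2
  set y := C *ᵥ x + D *ᵥ u with hy
  have h4 : Sum.elim y u ⬝ᵥ ((Matrix.fromBlocks Q S Sᵀ R) *ᵥ Sum.elim y u)
      = y ⬝ᵥ (Q *ᵥ y) + u ⬝ᵥ (R *ᵥ u) + 2 * (y ⬝ᵥ (S *ᵥ u)) := by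
    rw [Matrix.fromBlocks_mulVec, sumElim_dotProduct_sumElim,
      dotProduct_add, dotProduct_add]
    simp only [Sum.elim_comp_inl, Sum.elim_comp_inr]
    have : u ⬝ᵥ (Sᵀ *ᵥ y) = y ⬝ᵥ (S *ᵥ u) := by
      rw [Matrix.dotProduct_mulVec, Matrix.vecMul_transpose, dotProduct_comm]
    rw [this]; ring
  rw [h4] at h1
  linarith
end

section
/- Let σ : ℝ → ℝ be convex and nondecreasing, applied componentwise to vectors. Consider an input convex neural network defined recursively by l₀(x) = x and l_{i+1}(x) = σ(W_{i+1} l_i(x) + W^{(x)}_{i+1} x + b_{i+1}) for i = 0, …, L−1, where W₁ and all passthrough matrices W^{(x)}_1, …, W^{(x)}_L are arbitrary real matrices, all entries of W₂, …, W_L are nonnegative, and b₁, …, b_L are bias vectors. Then every component of the output map x ↦ l_L(x) is a convex function of the input x ∈ ℝⁿ. -/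
open Matrix

/-! Induction over the layers: each hidden unit is `σ` applied to a nonnegative combination of
convex functions of `x` (the previous layer) plus an affine function of `x` (the passthrough
term), hence convex because `σ` is convex and nondecreasing. The first layer is exempt from the
sign condition since `l₀(x) = x` is affine, so `W₁ l₀(x)` is affine for any `W₁`. -/

/-- The layers of an input convex neural network (ICNN): `l₀(x) = x` and
`l_{i+1}(x) = σ(W_{i+1} l_i(x) + W^{(x)}_{i+1} x + b_{i+1})`, where `σ` is applied
componentwise, `d i` is the width of layer `i`, `W i` is the hidden-to-hidden weight
matrix from layer `i` to layer `i+1` (corresponding to `W_{i+1}` in the usual indexing),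
`Wx i` is the passthrough matrix from the input to layer `i+1`, and `b i` is the bias of
layer `i+1`. -/
def icnnLayer (σ : ℝ → ℝ) {d : ℕ → ℕ}
    (W : ∀ i : ℕ, Matrix (Fin (d (i + 1))) (Fin (d i)) ℝ)
    (Wx : ∀ i : ℕ, Matrix (Fin (d (i + 1))) (Fin (d 0)) ℝ)
    (b : ∀ i : ℕ, Fin (d (i + 1)) → ℝ)
    (x : Fin (d 0) → ℝ) : ∀ i : ℕ, Fin (d i) → ℝ
  | 0 => x
  | i + 1 => fun j => σ ((W i *ᵥ icnnLayer σ W Wx b x i + Wx i *ᵥ x + b i) j)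

open Set

section ConvexOn

variable {𝕜 E α β ι : Type*} [Semiring 𝕜] [PartialOrder 𝕜] [AddCommMonoid E] [SMul 𝕜 E]
  [AddCommMonoid α] [PartialOrder α] [AddCommMonoid β] [PartialOrder β] {s : Set E}

theorem ConvexOn.comp_of_monotone [SMul 𝕜 α] [SMul 𝕜 β] {g : β → α} {f : E → β}
    (hg : ConvexOn 𝕜 univ g) (hf : ConvexOn 𝕜 s f) (hg' : Monotone g) :
    ConvexOn 𝕜 s (g ∘ f) :=
  ⟨hf.1, fun _ hx _ hy _ _ ha hb hab =>
    (hg' (hf.2 hx hy ha hb hab)).trans (hg.2 trivial trivial ha hb hab)⟩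

theorem ConvexOn.finset_sum [IsOrderedAddMonoid β] [Module 𝕜 β] {t : Finset ι}
    {f : ι → E → β} (hs : Convex 𝕜 s) (hf : ∀ i ∈ t, ConvexOn 𝕜 s (f i)) :
    ConvexOn 𝕜 s fun x => ∑ i ∈ t, f i x := by
  classical
  induction t using Finset.induction_on with
  | empty => simpa using convexOn_const 0 hs
  | insert a t hat ih =>
    simp_rw [Finset.sum_insert hat]
    exact (hf a (t.mem_insert_self a)).add
      (ih fun i hi => hf i (Finset.mem_insert_of_mem hi))

end ConvexOn

section Matrix

variable {𝕜 E m n : Type*} [CommSemiring 𝕜] [PartialOrder 𝕜] [IsOrderedRing 𝕜]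
  [Fintype n]

theorem convexOn_mulVec_apply_of_nonneg [AddCommMonoid E] [SMul 𝕜 E] {s : Set E}
    (hs : Convex 𝕜 s) {M : Matrix m n 𝕜} {j : m} (hM : ∀ k, 0 ≤ M j k) {f : n → E → 𝕜}
    (hf : ∀ k, ConvexOn 𝕜 s (f k)) :
    ConvexOn 𝕜 s fun x => (M *ᵥ fun k => f k x) j := by
  simpa only [mulVec, dotProduct, smul_eq_mul] using
    ConvexOn.finset_sum hs fun k _ => (hf k).smul (hM k)

theorem convexOn_mulVec_add_apply (A : Matrix m n 𝕜) (c : m → 𝕜) (j : m) :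
    ConvexOn 𝕜 univ fun x : n → 𝕜 => (A *ᵥ x + c) j :=
  (((LinearMap.proj j).comp A.mulVecLin).convexOn convex_univ).add_const (c j)

end Matrix

/-- **Input convexity of ICNNs.** If the activation `σ` is convex and nondecreasing and
all hidden-to-hidden weight matrices `W₂, …, W_L` (i.e. `W i` for `1 ≤ i < L` in the
zero-based indexing of `icnnLayer`) have nonnegative entries, while the first weight
matrix `W₁`, the passthrough matrices `W^{(x)}₁, …, W^{(x)}_L`, and the biases are
arbitrary, then every component of the output map `x ↦ l_L(x)` is a convex function of
the input. -/
theorem icnn_output_convex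
    {d : ℕ → ℕ} (L : ℕ)
    (σ : ℝ → ℝ) (hσconv : ConvexOn ℝ Set.univ σ) (hσmono : Monotone σ)
    (W : ∀ i : ℕ, Matrix (Fin (d (i + 1))) (Fin (d i)) ℝ)
    (Wx : ∀ i : ℕ, Matrix (Fin (d (i + 1))) (Fin (d 0)) ℝ)
    (b : ∀ i : ℕ, Fin (d (i + 1)) → ℝ)
    (hW : ∀ i : ℕ, 1 ≤ i → i < L → ∀ j k, 0 ≤ W i j k) :
    ∀ j : Fin (d L),
      ConvexOn ℝ Set.univ (fun x : Fin (d 0) → ℝ => icnnLayer σ W Wx b x L j) := by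
  suffices ∀ i ≤ L, ∀ j, ConvexOn ℝ univ fun x => icnnLayer σ W Wx b x i j from
    this L le_rfl
  intro i
  induction i with
  | zero => exact fun _ j => (LinearMap.proj j).convexOn convex_univ
  | succ i ih =>
    intro hi j
    refine hσconv.comp_of_monotone ?_ hσmono
    rcases i.eq_zero_or_pos with rfl | hpos
    · simpa only [icnnLayer, ← add_mulVec] using convexOn_mulVec_add_apply (W 0 + Wx 0) (b 0) j
    · have hprev := convexOn_mulVec_apply_of_nonneg convex_univ (hW i hpos hi j) (ih (by omega))
      have hpassthrough := convexOn_mulVec_add_apply (Wx i) (b i) j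
      simpa only [add_assoc, Pi.add_apply, Pi.add_def] using hprev.add hpassthrough
end
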